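/- arXiv:math-ph/0311041 — 2 statements merged into one kernel-verified Lean document; each statement's English description precedes it below -/
import Mathlib

section
/- Assume n ≤ m. The quasi-invariant q¹ = (z^N + w^N)^{2n+1} is annihilated by the Calogero–Moser operator 𝓛₁, i.e. the polynomial identity (∏_{k=0}^{2N−1}(ε^k·w − z))·∂z∂w q¹ = ∑_{k=0}^{2N−1} m_k·(∏_{0≤j≤2N−1, j≠k}(ε^j·w − z))·(ε^k·∂z q¹ − ∂w q¹) holds in R. -/
open MvPolynomial Finset

noncomputable section

/-- The polynomial ring `R = ℂ[z,w]`. -/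
abbrev R2 : Type := MvPolynomial (Fin 2) ℂ

/-- `z`, the first variable. -/
def zP : R2 := X 0

/-- `w`, the second variable (playing the role of `z̄`). -/
def wP : R2 := X 1

/-- `ε = exp(πi/N)`, a primitive `2N`-th root of unity. -/
def eps (N : ℕ) : ℂ := Complex.exp ((Real.pi : ℂ) * Complex.I / (N : ℂ))

/-- The reflection `σⱼ : z ↦ ε^j w, w ↦ ε^{-j} z` as a `ℂ`-algebra endomorphism. -/
def dihRefl (N j : ℕ) : R2 →ₐ[ℂ] R2 :=
  aeval (fun k : Fin 2 => if k = 0 then C (eps N ^ j) * X 1 else C (eps N ^ (-(j : ℤ))) * X 0)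

/-- The multiplicity `mⱼ`: `m` for even `j`, `n` for odd `j`. -/
def mult (m n j : ℕ) : ℕ := if Even j then m else n

/-- Quasi-invariance for the dihedral system `I₂(2N)` with multiplicities `(m,n)`. -/
def IsQuasiInv (N m n : ℕ) (p : R2) : Prop :=
  ∀ j < 2 * N, (zP - C (eps N ^ j) * wP) ^ (2 * mult m n j + 1) ∣ dihRefl N j p - p

/-- `p` is annihilated by the Calogero–Moser operator
`𝓛₁ = 4∂z∂w − 4∑ₖ mₖ(ε^k ∂z − ∂w)/(ε^k w − z)`, expressed as a polynomial identity
after clearing denominators. -/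
def AnnL1 (N m n : ℕ) (p : R2) : Prop :=
  (∏ k ∈ Finset.range (2 * N), (C (eps N ^ k) * wP - zP)) *
      (pderiv (0 : Fin 2) (pderiv (1 : Fin 2) p)) =
    ∑ k ∈ Finset.range (2 * N),
      C ((mult m n k : ℕ) : ℂ) *
        (∏ j ∈ (Finset.range (2 * N)).erase k, (C (eps N ^ j) * wP - zP)) *
        (C (eps N ^ k) * pderiv (0 : Fin 2) p - pderiv (1 : Fin 2) p)

/-!
Write `s = z^N + w^N`. Both first derivatives of `s^(2n+1)` are `(2n+1) N s^(2n)` times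
`z^(N-1)` resp. `w^(N-1)`, and `∏ₖ (ε^k w - z) = z^(2N) - w^(2N) = (z^N - w^N) s`, so after dividing
by `(2n+1) N s^(2n)` the identity becomes
`∑ₖ mₖ Pₖ (ε^k z^(N-1) - w^(N-1)) = 2nN z^(N-1) w^(N-1) (z^N - w^N)`,
where `Pₖ = ∏_{j ≠ k} (ε^j w - z) = -∑ᵢ zⁱ (ε^k w)^(2N-1-i)` is a geometric sum.
Expanding in powers of `ε^k` turns the sum over `k` into the sums `χ(t) = ∑ₖ mₖ ε^(tk)`,
which vanish unless `N ∣ t` and equal `N (m + n)` resp. `N (m - n)` for `t ≡ 0` resp. `t ≡ N`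
mod `2N`; only four terms survive, and `m` cancels.
-/
namespace IsPrimitiveRoot

variable {A : Type*} [CommRing A] [IsDomain A] {ζ : A} {M : ℕ}

theorem prod_range_sub_pow_mul (h : IsPrimitiveRoot ζ M) (hM : 0 < M) (x y : A) :
    ∏ k ∈ range M, (x - ζ ^ k * y) = x ^ M - y ^ M := by
  classical
  rw [h.pow_sub_pow_eq_prod_sub_mul x y hM, Polynomial.nthRootsFinset_def,
    Finset.prod_eq_multiset_prod, Finset.prod_eq_multiset_prod, Multiset.toFinset_val,
    h.nthRoots_one_nodup.dedup, h.nthRoots_eq (one_pow M), Multiset.map_map]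
  simp

theorem prod_erase_range_sub_pow_mul (h : IsPrimitiveRoot ζ M) (hM : 0 < M) {x y : A} {k : ℕ}
    (hk : k ∈ range M) (hxy : x - ζ ^ k * y ≠ 0) :
    ∏ j ∈ (range M).erase k, (x - ζ ^ j * y) =
      ∑ i ∈ range M, x ^ i * (ζ ^ k * y) ^ (M - 1 - i) := by
  refine mul_right_cancel₀ hxy ?_
  rw [prod_erase_mul _ _ hk, h.prod_range_sub_pow_mul hM, geom_sum₂_mul, mul_pow, ← pow_mul,
    mul_comm k, pow_mul, h.pow_eq_one, one_pow, one_mul]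

theorem pow_half_eq_neg_one {N : ℕ} (h : IsPrimitiveRoot ζ (2 * N)) (hN : 0 < N) :
    ζ ^ N = -1 :=
  eq_neg_one_of_two_right <| by
    simpa [Nat.mul_div_cancel _ hN] using h.pow_of_dvd hN.ne' (dvd_mul_left N 2)

end IsPrimitiveRoot

section

variable {K : Type*} [Field K]

def multCharSum (m n N : ℕ) (x : K) : K :=
  ∑ k ∈ range (2 * N), (mult m n k : K) * x ^ k

theorem multCharSum_eq_mul_geom_sum (m n N : ℕ) (x : K) :
    multCharSum m n N x = (m + n * x) * ∑ l ∈ range N, (x ^ 2) ^ l := by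
  induction N with
  | zero => simp [multCharSum]
  | succ N ih =>
    have hm : (mult m n (2 * N) : K) = m := by simp [mult]
    have hn : (mult m n (2 * N + 1) : K) = n := by simp [mult]
    rw [multCharSum, show 2 * (N + 1) = 2 * N + 1 + 1 by ring, sum_range_succ, sum_range_succ,
      ← multCharSum, ih, sum_range_succ, hm, hn]
    ring

theorem multCharSum_eq_zero {ζ : K} {N : ℕ} (hζ : IsPrimitiveRoot ζ (2 * N)) (m n : ℕ) {t : ℕ}
    (ht : ¬ N ∣ t) :
    multCharSum m n N (ζ ^ t) = 0 := by
  have hne : (ζ ^ t) ^ 2 ≠ 1 := by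
    rwa [← pow_mul, Ne, hζ.pow_eq_one_iff_dvd, mul_comm t, Nat.mul_dvd_mul_iff_left two_pos]
  have hpow : ((ζ ^ t) ^ 2) ^ N = 1 := by
    rw [← pow_mul, ← pow_mul, mul_comm, pow_mul, hζ.pow_eq_one, one_pow]
  rw [multCharSum_eq_mul_geom_sum, geom_sum_eq hne, hpow, sub_self, zero_div, mul_zero]

theorem multCharSum_of_sq_eq_one (m n N : ℕ) {x : K} (hx : x ^ 2 = 1) :
    multCharSum m n N x = N * (m + n * x) := by
  simp [multCharSum_eq_mul_geom_sum, hx, mul_comm]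

end

theorem Nat.not_dvd_of_lt_two_mul {N t : ℕ} (h₀ : 0 < t) (hN : t ≠ N) (h₂ : t < 2 * N) :
    ¬ N ∣ t := by
  rcases lt_or_gt_of_ne hN with h | h
  · exact Nat.not_dvd_of_pos_of_lt h₀ h
  · exact fun hdvd => Nat.not_dvd_of_pos_of_lt (Nat.sub_pos_of_lt h) (by omega)
      (Nat.dvd_sub hdvd dvd_rfl)

section

variable {K A : Type*} [Field K] [CommRing A] [Algebra K A]

theorem mult_mul_geom_term_mul_eq (m n N k i : ℕ) (ζ : K) (z w : A) :
    algebraMap K A (mult m n k) * (z ^ i * (algebraMap K A (ζ ^ k) * w) ^ (2 * N - 1 - i)) *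
        (w ^ (N - 1) - algebraMap K A (ζ ^ k) * z ^ (N - 1)) =
      z ^ i * w ^ (2 * N - 1 - i) *
        (algebraMap K A (mult m n k * (ζ ^ (2 * N - 1 - i)) ^ k) * w ^ (N - 1) -
          algebraMap K A (mult m n k * (ζ ^ (2 * N - 1 - i + 1)) ^ k) * z ^ (N - 1)) := by
  simp only [map_mul, map_pow]
  ring

theorem sum_mult_geom_sum₂_mul_eq {ζ : K} {N : ℕ} (hζ : IsPrimitiveRoot ζ (2 * N)) (hN : 0 < N)
    (m n : ℕ) (z w : A) :
    ∑ k ∈ range (2 * N), algebraMap K A (mult m n k) *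
        (∑ i ∈ range (2 * N), z ^ i * (algebraMap K A (ζ ^ k) * w) ^ (2 * N - 1 - i)) *
        (w ^ (N - 1) - algebraMap K A (ζ ^ k) * z ^ (N - 1)) =
      2 * n * N * z ^ (N - 1) * w ^ (N - 1) * (z ^ N - w ^ N) := by
  set χ := fun t => algebraMap K A (multCharSum m n N (ζ ^ t))
  have hχ : ∀ t, ¬ N ∣ t → χ t = 0 := fun t ht => by
    simp only [χ, multCharSum_eq_zero hζ m n ht, map_zero]
  have hmem : ∀ i < 2 * N, i ∈ range (2 * N) := fun i hi => mem_range.2 hi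
  calc _ = ∑ i ∈ range (2 * N), z ^ i * w ^ (2 * N - 1 - i) *
          (χ (2 * N - 1 - i) * w ^ (N - 1) - χ (2 * N - 1 - i + 1) * z ^ (N - 1)) := by
        simp only [mul_sum, sum_mul, mult_mul_geom_term_mul_eq]
        rw [sum_comm]
        refine sum_congr rfl fun i _ => ?_
        simp only [χ, multCharSum, map_sum, ← mul_sum, sum_sub_distrib, ← sum_mul]
    _ = ∑ i ∈ range (2 * N), z ^ i * w ^ (2 * N - 1 - i) * w ^ (N - 1) * χ (2 * N - 1 - i)
          - ∑ i ∈ range (2 * N), z ^ i * w ^ (2 * N - 1 - i) * z ^ (N - 1) * χ (2 * N - i) := by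
        rw [← sum_sub_distrib]
        refine sum_congr rfl fun i hi => ?_
        rw [show 2 * N - 1 - i + 1 = 2 * N - i by grind]
        ring
    _ = (z ^ (N - 1) * w ^ N * w ^ (N - 1) * χ N + z ^ (2 * N - 1) * w ^ (N - 1) * χ 0)
          - (w ^ (2 * N - 1) * z ^ (N - 1) * χ (2 * N)
            + z ^ N * w ^ (N - 1) * z ^ (N - 1) * χ N) := by
        rw [sum_eq_add (N - 1) (2 * N - 1) (by omega) ?_ (absurd (hmem (N - 1) (by omega)))
            (absurd (hmem (2 * N - 1) (by omega))),
          sum_eq_add 0 N hN.ne ?_ (absurd (hmem 0 (by omega))) (absurd (hmem N (by omega)))]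
        · simp only [pow_zero, one_mul, mul_one, Nat.sub_zero, Nat.sub_self,
            show 2 * N - 1 - N = N - 1 by omega, show 2 * N - N = N by omega,
            show 2 * N - 1 - (N - 1) = N by omega]
        all_goals
          rintro i hi ⟨hi₁, hi₂⟩
          rw [mem_range] at hi
          rw [hχ _ (Nat.not_dvd_of_lt_two_mul (by omega) (by omega) (by omega)), mul_zero]
    _ = _ := by
        have h0 : χ 0 = N * (m + n) := by
          simp [χ, multCharSum_of_sq_eq_one]
        have h2N : χ (2 * N) = N * (m + n) := by
          simp [χ, multCharSum_of_sq_eq_one, hζ.pow_eq_one]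
        have hN' : χ N = N * (m - n) := by
          simp [χ, multCharSum_of_sq_eq_one, hζ.pow_half_eq_neg_one hN, sub_eq_add_neg]
        rw [h0, h2N, hN', show 2 * N - 1 = N + (N - 1) by omega, pow_add, pow_add]
        ring

end

theorem eps_isPrimitiveRoot {N : ℕ} (hN : 0 < N) : IsPrimitiveRoot (eps N) (2 * N) := by
  convert Complex.isPrimitiveRoot_exp (2 * N) (by omega) using 2
  rw [eps]
  push_cast
  field_simp

theorem zP_sub_C_mul_wP_ne_zero (c : ℂ) : zP - C c * wP ≠ 0 := by
  intro h
  simpa [zP, wP] using congrArg (eval fun i => if i = 0 then 1 else 0) h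

section

variable {ζ : ℂ} {N : ℕ}

theorem prod_range_C_mul_wP_sub_zP (hζ : IsPrimitiveRoot ζ (2 * N)) (hN : 0 < N) :
    ∏ k ∈ range (2 * N), (C (ζ ^ k) * wP - zP) = zP ^ (2 * N) - wP ^ (2 * N) := by
  have hC := hζ.map_of_injective (C_injective (Fin 2) ℂ)
  simp only [map_pow, ← neg_sub zP]
  rw [prod_neg, hC.prod_range_sub_pow_mul (by omega), card_range, (even_two_mul N).neg_one_pow,
    one_mul]

theorem prod_erase_C_mul_wP_sub_zP (hζ : IsPrimitiveRoot ζ (2 * N)) (hN : 0 < N) {k : ℕ}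
    (hk : k ∈ range (2 * N)) :
    ∏ j ∈ (range (2 * N)).erase k, (C (ζ ^ j) * wP - zP) =
      -∑ i ∈ range (2 * N), zP ^ i * (C (ζ ^ k) * wP) ^ (2 * N - 1 - i) := by
  have hC := hζ.map_of_injective (C_injective (Fin 2) ℂ)
  simp only [map_pow, ← neg_sub zP]
  have hne : zP - C ζ ^ k * wP ≠ 0 := by simpa using zP_sub_C_mul_wP_ne_zero (ζ ^ k)
  rw [prod_neg, hC.prod_erase_range_sub_pow_mul (by omega) hk hne, card_erase_of_mem hk,
    card_range, Odd.neg_one_pow ⟨N - 1, by omega⟩, neg_one_mul]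

end

theorem sum_mult_mul_prod_erase_eq {ζ : ℂ} {N : ℕ} (hζ : IsPrimitiveRoot ζ (2 * N)) (hN : 0 < N)
    (m n : ℕ) (u : R2) :
    ∑ k ∈ range (2 * N), C (mult m n k : ℂ) *
        (∏ j ∈ (range (2 * N)).erase k, (C (ζ ^ j) * wP - zP)) *
        (C (ζ ^ k) * (u * zP ^ (N - 1)) - u * wP ^ (N - 1)) =
      u * (2 * n * N * zP ^ (N - 1) * wP ^ (N - 1) * (zP ^ N - wP ^ N)) := by
  rw [← sum_mult_geom_sum₂_mul_eq hζ hN, mul_sum]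
  refine sum_congr rfl fun k hk => ?_
  rw [prod_erase_C_mul_wP_sub_zP hζ hN hk, algebraMap_eq]
  ring

theorem pderiv_zero_powSum_pow (N e : ℕ) :
    pderiv 0 ((zP ^ N + wP ^ N) ^ e) = e * N * (zP ^ N + wP ^ N) ^ (e - 1) * zP ^ (N - 1) := by
  simp only [pderiv_pow, map_add, zP, wP, pderiv_X_self, pderiv_X_of_ne one_ne_zero]
  ring

theorem pderiv_one_powSum_pow (N e : ℕ) :
    pderiv 1 ((zP ^ N + wP ^ N) ^ e) = e * N * (zP ^ N + wP ^ N) ^ (e - 1) * wP ^ (N - 1) := by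
  simp only [pderiv_pow, map_add, zP, wP, pderiv_X_self, pderiv_X_of_ne zero_ne_one]
  ring

theorem pderiv_zero_pderiv_one_powSum_pow (N e : ℕ) :
    pderiv 0 (pderiv 1 ((zP ^ N + wP ^ N) ^ e)) =
      e * (e - 1 : ℕ) * N * N * (zP ^ N + wP ^ N) ^ (e - 1 - 1) * zP ^ (N - 1) * wP ^ (N - 1) := by
  rw [pderiv_one_powSum_pow, pderiv_mul, pderiv_mul, pderiv_zero_powSum_pow]
  simp only [pderiv_mul, Derivation.map_natCast, pderiv_pow, wP, pderiv_X_of_ne one_ne_zero]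
  ring

theorem q1_mHarmonic_L1_general (N m n : ℕ) (hN : 1 ≤ N) :
    AnnL1 N m n ((zP ^ N + wP ^ N) ^ (2 * n + 1)) := by
  have hε := eps_isPrimitiveRoot hN
  rw [AnnL1, pderiv_zero_pderiv_one_powSum_pow, pderiv_zero_powSum_pow, pderiv_one_powSum_pow,
    prod_range_C_mul_wP_sub_zP hε hN, sum_mult_mul_prod_erase_eq hε hN, Nat.add_sub_cancel]
  have hs : (n : R2) * (zP ^ N + wP ^ N) ^ (2 * n - 1) * (zP ^ N + wP ^ N) =
      n * (zP ^ N + wP ^ N) ^ (2 * n) := by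
    rcases Nat.eq_zero_or_pos n with rfl | hn
    · simp
    · rw [mul_assoc, ← pow_succ, Nat.sub_add_cancel (by omega)]
  push_cast
  linear_combination
    (2 * (2 * n + 1) * N * N * zP ^ (N - 1) * wP ^ (N - 1) * (zP ^ N - wP ^ N) : R2) * hs

theorem q1_mHarmonic_L1 (N m n : ℕ) (hN : 1 ≤ N) (hnm : n ≤ m) :
    AnnL1 N m n ((zP ^ N + wP ^ N) ^ (2 * n + 1)) :=
  q1_mHarmonic_L1_general N m n hN
end
end

section
/- Assume n ≤ m. The quasi-invariant q³ = (z^N + w^N)^{2n+1}·(z^N − w^N)^{2m+1} is annihilated by the Calogero–Moser operator 𝓛₁, i.e. the polynomial identity (∏_{k=0}^{2N−1}(ε^k·w − z))·∂z∂w q³ = ∑_{k=0}^{2N−1} m_k·(∏_{0≤j≤2N−1, j≠k}(ε^j·w − z))·(ε^k·∂z q³ − ∂w q³) holds in R. -/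
open MvPolynomial Finset

noncomputable section

/-!
Split the mirrors into the two orbits, `k` even and `k` odd, and let `E`, `O` be the products of
the linear forms `ε^k w - z` over them. For the derivation `D = ∂z p • ∂w + ∂w p • ∂z` the term of
index `k` on the right is `mₖ (∏_{j ≠ k} (ε^j w - z)) D(ε^k w - z)`, so by the Leibniz rule the right
side is `m O D(E) + n E D(O)`. Since `ε²` is a primitive `N`-th root of unity and `ε^N = -1`,
`E = (-1)^N (z^N - w^N)` and `O = (-1)^N (z^N + w^N)`. With `A = z^N - w^N`, `B = z^N + w^N` the claim
becomes `A B ∂z∂w p = m B D(A) + n A D(B)` for `p = B^(2n+1) A^(2m+1)`, a direct computation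
that only uses `∂z A = ∂z B`, `∂w A = -∂w B` and `∂z ∂w B = 0`.
-/

namespace Derivation

variable {R A M ι : Type*} [CommSemiring R] [CommSemiring A] [Algebra R A] [DecidableEq ι]

section Module

variable [AddCommMonoid M] [Module A M] [Module R M] (D : Derivation R A M)

theorem leibniz_prod (s : Finset ι) (f : ι → A) :
    D (∏ i ∈ s, f i) = ∑ i ∈ s, (∏ j ∈ s.erase i, f j) • D (f i) := by
  induction s using Finset.induction_on with
  | empty => simp
  | @insert a s ha ih =>
    rw [prod_insert ha, leibniz, ih, sum_insert ha, erase_insert ha, smul_sum, add_comm]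
    congr 1
    refine sum_congr rfl fun i hi => ?_
    rw [erase_insert_of_ne (ne_of_mem_of_not_mem hi ha).symm,
      prod_insert fun h => ha (mem_of_mem_erase h), mul_smul]

theorem sum_prod_erase_smul_of_subset {s t : Finset ι} (hts : t ⊆ s) (f : ι → A) :
    ∑ i ∈ t, (∏ j ∈ s.erase i, f j) • D (f i) = (∏ j ∈ s \ t, f j) • D (∏ i ∈ t, f i) := by
  rw [leibniz_prod, smul_sum]
  refine sum_congr rfl fun i hi => ?_
  have hsdiff : s.erase i \ t.erase i = s \ t := by
    ext j; by_cases hji : j = i <;> simp [hji, hi]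
  rw [← prod_sdiff (erase_subset_erase i hts), hsdiff, mul_smul]

end Module

variable (D : Derivation R A A)

theorem sum_filter_mul_prod_erase_mul (s : Finset ι) (P : ι → Prop) [DecidablePred P] (c : A)
    (f : ι → A) :
    ∑ i ∈ s.filter P, c * (∏ j ∈ s.erase i, f j) * D (f i) =
      c * (∏ i ∈ s.filter (¬P ·), f i) * D (∏ i ∈ s.filter P, f i) := by
  calc ∑ i ∈ s.filter P, c * (∏ j ∈ s.erase i, f j) * D (f i)
      = c * ∑ i ∈ s.filter P, (∏ j ∈ s.erase i, f j) • D (f i) := by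
        rw [mul_sum]; exact sum_congr rfl fun i _ => by rw [smul_eq_mul, mul_assoc]
    _ = _ := by
        rw [D.sum_prod_erase_smul_of_subset (filter_subset P s), ← filter_not, smul_eq_mul,
          mul_assoc]

theorem sum_ite_mul_prod_erase_mul (s : Finset ι) (P : ι → Prop) [DecidablePred P] (a b : A)
    (f : ι → A) :
    ∑ i ∈ s, (if P i then a else b) * (∏ j ∈ s.erase i, f j) * D (f i) =
      a * (∏ i ∈ s.filter (¬P ·), f i) * D (∏ i ∈ s.filter P, f i) +
        b * (∏ i ∈ s.filter P, f i) * D (∏ i ∈ s.filter (¬P ·), f i) := by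
  simp only [ite_mul]
  rw [sum_ite, sum_filter_mul_prod_erase_mul, sum_filter_mul_prod_erase_mul]
  simp only [not_not]

theorem mul_apply_pow (a : A) (k : ℕ) : a * D (a ^ k) = k * a ^ k * D a := by
  cases k with
  | zero => simp
  | succ k => rw [leibniz_pow, Nat.add_sub_cancel, nsmul_eq_mul, smul_eq_mul]; push_cast; ring

theorem apply_pow_succ (a : A) (k : ℕ) : D (a ^ (k + 1)) = (k + 1) * a ^ k * D a := by
  rw [leibniz_pow, Nat.add_sub_cancel, nsmul_eq_mul, smul_eq_mul]; push_cast; ring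

end Derivation

theorem calogeroMoser_pow_mul_pow {R S : Type*} [CommSemiring R] [CommRing S] [Algebra R S]
    (D₀ D₁ : Derivation R S S) {A B p : S} (h₀ : D₀ A = D₀ B) (h₁ : D₁ A = -D₁ B)
    (h₀₁ : D₀ (D₁ B) = 0) (m n : ℕ) (hp : p = B ^ (2 * n + 1) * A ^ (2 * m + 1)) :
    A * B * D₀ (D₁ p) =
      m * B * (D₀ p • D₁ + D₁ p • D₀) A + n * A * (D₀ p • D₁ + D₁ p • D₀) B := by
  have hp₀ : D₀ p = D₀ B * B ^ (2 * n) * A ^ (2 * m) *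
      (((2 * n + 1 : ℕ) : S) * A + ((2 * m + 1 : ℕ) : S) * B) := by
    simp only [hp, Derivation.leibniz, Derivation.apply_pow_succ, h₀, smul_eq_mul]; push_cast; ring
  have hp₁ : D₁ p = D₁ B * B ^ (2 * n) * A ^ (2 * m) *
      (((2 * n + 1 : ℕ) : S) * A - ((2 * m + 1 : ℕ) : S) * B) := by
    simp only [hp, Derivation.leibniz, Derivation.apply_pow_succ, h₁, smul_eq_mul]; push_cast; ring
  have hA := D₀.mul_apply_pow A (2 * m)
  have hB := D₀.mul_apply_pow B (2 * n)
  rw [h₀] at hA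
  simp only [Derivation.add_apply, Derivation.smul_apply, smul_eq_mul]
  rw [hp₀, hp₁, h₀, h₁]
  simp only [Derivation.leibniz, map_sub, h₀, h₀₁, smul_eq_mul, Derivation.map_natCast]
  push_cast at hA hB ⊢
  linear_combination (D₁ B * A ^ (2 * m + 1) * ((2 * n + 1) * A - (2 * m + 1) * B)) * hB
    + (D₁ B * B ^ (2 * n + 1) * ((2 * n + 1) * A - (2 * m + 1) * B)) * hA

theorem prod_range_pow_mul_sub {S : Type*} [CommRing S] [IsDomain S] {ζ : S} {N : ℕ}
    (hζ : IsPrimitiveRoot ζ N) (hN : 0 < N) (x y : S) :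
    ∏ i ∈ range N, (ζ ^ i * y - x) = (-1) ^ N * (x ^ N - y ^ N) := by
  have h := congrArg (Polynomial.eval x) (X_pow_sub_C_eq_prod hζ hN (α := y) rfl)
  simp only [Polynomial.eval_sub, Polynomial.eval_pow, Polynomial.eval_X, Polynomial.eval_C,
    Polynomial.eval_prod] at h
  calc ∏ i ∈ range N, (ζ ^ i * y - x) = ∏ i ∈ range N, (-1) * (x - ζ ^ i * y) :=
        prod_congr rfl fun i _ => by ring
    _ = (-1) ^ N * (x ^ N - y ^ N) := by rw [prod_mul_distrib, prod_const, card_range, h]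

theorem prod_range_two_mul_filter_even {M : Type*} [CommMonoid M] (f : ℕ → M) (N : ℕ) :
    ∏ k ∈ (range (2 * N)).filter Even, f k = ∏ i ∈ range N, f (2 * i) := by
  rw [prod_filter]
  induction N with
  | zero => simp
  | succ N ih =>
    rw [show 2 * (N + 1) = 2 * N + 1 + 1 by ring, prod_range_succ, prod_range_succ, ih,
      prod_range_succ]
    simp

theorem prod_range_two_mul_filter_odd {M : Type*} [CommMonoid M] (f : ℕ → M) (N : ℕ) :
    ∏ k ∈ (range (2 * N)).filter (¬Even ·), f k = ∏ i ∈ range N, f (2 * i + 1) := by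
  rw [prod_filter]
  induction N with
  | zero => simp
  | succ N ih =>
    rw [show 2 * (N + 1) = 2 * N + 1 + 1 by ring, prod_range_succ, prod_range_succ, ih,
      prod_range_succ]
    simp

theorem isPrimitiveRoot_eps_sq {N : ℕ} (hN : 1 ≤ N) : IsPrimitiveRoot (eps N ^ 2) N := by
  convert Complex.isPrimitiveRoot_exp N (by omega) using 1
  rw [eps, ← Complex.exp_nat_mul]
  ring_nf

theorem eps_pow_self {N : ℕ} (hN : 1 ≤ N) : eps N ^ N = -1 := by
  rw [eps, ← Complex.exp_nat_mul, mul_div_cancel₀ _ (Nat.cast_ne_zero.2 (by omega)),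
    Complex.exp_pi_mul_I]

theorem prod_range_eps_even_mul_sub {N : ℕ} (hN : 1 ≤ N) :
    ∏ i ∈ range N, (C (eps N ^ (2 * i)) * wP - zP) = (-1) ^ N * (zP ^ N - wP ^ N) := by
  rw [← prod_range_pow_mul_sub ((isPrimitiveRoot_eps_sq hN).map_of_injective
    (C_injective (Fin 2) ℂ)) (by omega) zP wP]
  exact prod_congr rfl fun i _ => by rw [pow_mul, map_pow]

theorem prod_range_eps_odd_mul_sub {N : ℕ} (hN : 1 ≤ N) :
    ∏ i ∈ range N, (C (eps N ^ (2 * i + 1)) * wP - zP) = (-1) ^ N * (zP ^ N + wP ^ N) := by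
  have h := prod_range_pow_mul_sub ((isPrimitiveRoot_eps_sq hN).map_of_injective
    (C_injective (Fin 2) ℂ)) (by omega) zP (C (eps N) * wP)
  rw [mul_pow, ← map_pow, eps_pow_self hN, map_neg, map_one, neg_one_mul, sub_neg_eq_add] at h
  rw [← h]
  exact prod_congr rfl fun i _ => by rw [pow_succ, pow_mul, map_mul, map_pow, mul_assoc]

theorem q3_mHarmonic_L1_general (N m n : ℕ) (hN : 1 ≤ N) :
    AnnL1 N m n ((zP ^ N + wP ^ N) ^ (2 * n + 1) * (zP ^ N - wP ^ N) ^ (2 * m + 1)) := by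
  set p := (zP ^ N + wP ^ N) ^ (2 * n + 1) * (zP ^ N - wP ^ N) ^ (2 * m + 1) with hp
  have key := calogeroMoser_pow_mul_pow (pderiv 0) (pderiv 1) (A := zP ^ N - wP ^ N)
    (by simp [zP, wP]) (by simp [zP, wP]) (by simp [zP, wP]) m n hp
  set D : Derivation ℂ R2 R2 := pderiv 0 p • pderiv 1 + pderiv 1 p • pderiv 0
  have hD : ∀ c : ℂ, C c * pderiv 0 p - pderiv 1 p = D (C c * wP - zP) := fun c => by
    simp [D, zP, wP]; ring
  have hmult : ∀ k, C ((mult m n k : ℕ) : ℂ) = if Even k then (m : R2) else n := fun k => by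
    unfold mult; split_ifs <;> simp
  unfold AnnL1
  simp only [hD, hmult]
  rw [D.sum_ite_mul_prod_erase_mul, ← prod_filter_mul_prod_filter_not _ Even,
    prod_range_two_mul_filter_even, prod_range_two_mul_filter_odd,
    prod_range_eps_even_mul_sub hN, prod_range_eps_odd_mul_sub hN]
  simp only [Derivation.leibniz, Derivation.leibniz_pow, map_neg, Derivation.map_one_eq_zero,
    neg_zero, mul_zero, smul_zero, add_zero, smul_eq_mul]
  linear_combination ((-1 : R2) ^ N) ^ 2 * key

theorem q3_mHarmonic_L1 (N m n : ℕ) (hN : 1 ≤ N) (hnm : n ≤ m) :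
    AnnL1 N m n ((zP ^ N + wP ^ N) ^ (2 * n + 1) * (zP ^ N - wP ^ N) ^ (2 * m + 1)) :=
  q3_mHarmonic_L1_general N m n hN
end
end
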